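/- Consider a stochastic weight matrix W(t) ∈ [0,1]^{n×m} (each row sums to 1) satisfying the monotonic property: if R̂_{ui}(t) ≥ R̂_{uj}(t) then W_{ui}(t) ≥ W_{uj}(t) for items i, j not yet shown to user u. Let F(r, R̂_u) = |{j : R̂_{uj}(t) ≥ r}| and suppose at most t-1 items have been shown to user u. Then for any item i with t < F(R̂_{ui}(t), R̂_u(t)) + 1, W_{ui}(t) ≤ 1/(F(R̂_{ui}(t), R̂_u(t)) - t + 1). -/
import Mathlib


open Finset

/-- Weight upper bound for an objective recommendation engine: if the weight vector
`Wt` of a user is stochastic and monotone in the estimated ratings `Rhat` on items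
not yet shown, and at most `t-1` items have been shown, then for any unshown item `i`
with `t < F(Rhat i) + 1`, the weight satisfies
`Wt i ≤ 1 / (F(Rhat i) - t + 1)`, where `F r = |{j : Rhat j ≥ r}|`. -/
theorem objective_weight_upper_bound {m : ℕ} (Wt Rhat : Fin m → ℝ)
    (shown : Finset (Fin m)) (t : ℕ) (ht : 1 ≤ t)
    (F : ℝ → ℕ)
    (hF : ∀ r, F r = (Finset.univ.filter (fun j => r ≤ Rhat j)).card)
    (hW0 : ∀ j, 0 ≤ Wt j) (hW1 : ∑ j, Wt j = 1)
    (hmono : ∀ i j, i ∉ shown → j ∉ shown → Rhat j ≤ Rhat i → Wt j ≤ Wt i)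
    (hshown : shown.card ≤ t - 1)
    (i : Fin m) (hi : i ∉ shown)
    (hti : (t : ℝ) < (F (Rhat i) : ℝ) + 1) :
    Wt i ≤ 1 / ((F (Rhat i) : ℝ) - t + 1) := by
  -- Set of unshown items at least as good as i
  set A : Finset (Fin m) := Finset.univ.filter (fun j => Rhat i ≤ Rhat j) with hA
  set S : Finset (Fin m) := A \ shown with hS
  have htF : t ≤ F (Rhat i) := by
    have h : t < F (Rhat i) + 1 := by exact_mod_cast hti
    omega
  -- cardinality bound
  have hcardA : A.card = F (Rhat i) := (hF (Rhat i)).symm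
  have hcardS : F (Rhat i) - (t - 1) ≤ S.card := by
    calc F (Rhat i) - (t - 1) ≤ A.card - shown.card := by
          rw [hcardA]; exact Nat.sub_le_sub_left hshown _
      _ ≤ S.card := le_card_sdiff _ _
  have hSreal : (F (Rhat i) : ℝ) - t + 1 ≤ (S.card : ℝ) := by
    have h1 : F (Rhat i) - (t - 1) = F (Rhat i) - t + 1 := by omega
    have : ((F (Rhat i) - t + 1 : ℕ) : ℝ) ≤ (S.card : ℝ) := by
      exact_mod_cast h1 ▸ hcardS
    rw [Nat.cast_add, Nat.cast_sub htF] at this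
    simpa using this
  have hpos : (0 : ℝ) < (F (Rhat i) : ℝ) - t + 1 := by linarith
  -- each element of S has weight ≥ Wt i
  have hge : ∀ j ∈ S, Wt i ≤ Wt j := by
    intro j hj
    rw [hS, Finset.mem_sdiff] at hj
    obtain ⟨hjA, hjs⟩ := hj
    rw [hA, Finset.mem_filter] at hjA
    exact hmono j i hjs hi hjA.2
  have hsum : (S.card : ℝ) * Wt i ≤ ∑ j ∈ S, Wt j := by
    rw [Finset.card_eq_sum_ones, Nat.cast_sum, Finset.sum_mul]
    apply Finset.sum_le_sum
    intro j hj; simpa using hge j hj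
  have hsum1 : ∑ j ∈ S, Wt j ≤ 1 := by
    rw [← hW1]
    exact Finset.sum_le_sum_of_subset_of_nonneg (Finset.subset_univ S)
      (fun j _ _ => hW0 j)
  have hWi0 : 0 ≤ Wt i := hW0 i
  have key : ((F (Rhat i) : ℝ) - t + 1) * Wt i ≤ 1 := by
    calc ((F (Rhat i) : ℝ) - t + 1) * Wt i ≤ (S.card : ℝ) * Wt i :=
          mul_le_mul_of_nonneg_right hSreal hWi0
      _ ≤ ∑ j ∈ S, Wt j := hsum
      _ ≤ 1 := hsum1
  rw [le_div_iff₀ hpos]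
  linarith [key]
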